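/- Let H be a vertex-minimal finite simple graph with θ(H) ≤ 8 and χ'_s(H) > 20. Then no 4-vertex of H is adjacent to four 3-vertices. -/

import Mathlib

/-!
Colour `H − x` with 20 colours by minimality. Every edge `xy` at the 4-vertex `x` sees at most
16 edges of `H − x`: at most two more at each of the four 3-vertices adjacent to `x`, and, since
`θ ≤ 8`, at most four more at each of the two other neighbours of `y`, which have degree at most
5. So each of the four edges at `x` has at least four free colours, and as they pairwise see each
other, Hall's theorem colours them with distinct free colours, contradicting `χ'ₛ(H) > 20`.
-/

open SimpleGraph Finset

variable {V : Type*}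

/-- Two edges are at distance at most 2 (they "see" each other): distinct and
some endpoint of one equals or is adjacent to some endpoint of the other. -/
def EdgeSees (G : SimpleGraph V) (e e' : Sym2 V) : Prop :=
  e ≠ e' ∧ ∃ a ∈ e, ∃ b ∈ e', a = b ∨ G.Adj a b

/-- `G` admits a strong `N`-edge-coloring. -/
def HasStrongColoring (G : SimpleGraph V) (N : ℕ) : Prop :=
  ∃ f : G.edgeSet → Fin N, ∀ e e' : G.edgeSet, EdgeSees G e.val e'.val → f e ≠ f e'

/-- `G − v`: delete the vertex `v` (remove all edges incident to it). -/
def DelV (G : SimpleGraph V) (v : V) : SimpleGraph V where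
  Adj a b := G.Adj a b ∧ a ≠ v ∧ b ≠ v
  symm := ⟨fun _ _ h => ⟨h.1.symm, h.2.2, h.2.1⟩⟩
  loopless := ⟨fun a h => G.ne_of_adj h.1 rfl⟩

lemma EdgeSees.symm {G : SimpleGraph V} {e e' : Sym2 V} (h : EdgeSees G e e') :
    EdgeSees G e' e := by
  obtain ⟨hne, a, ha, b, hb, hab⟩ := h
  exact ⟨hne.symm, b, hb, a, ha, hab.imp Eq.symm Adj.symm⟩

lemma mem_edgeSet_delV {G : SimpleGraph V} {v : V} {e : Sym2 V} :
    e ∈ (DelV G v).edgeSet ↔ e ∈ G.edgeSet ∧ v ∉ e := by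
  induction e using Sym2.ind with
  | _ a b => simp [DelV, eq_comm]

lemma EdgeSees.delV {G : SimpleGraph V} {v : V} {e e' : Sym2 V} (h : EdgeSees G e e')
    (he : v ∉ e) (he' : v ∉ e') : EdgeSees (DelV G v) e e' := by
  obtain ⟨hne, a, ha, b, hb, hab⟩ := h
  refine ⟨hne, a, ha, b, hb, hab.imp id fun hab => ⟨hab, ?_, ?_⟩⟩
  · rintro rfl; exact he ha
  · rintro rfl; exact he' hb

lemma delV_le (G : SimpleGraph V) (v : V) : DelV G v ≤ G := fun _ _ h => h.1

lemma degree_delV_add_one {G : SimpleGraph V} {v z : V} [Fintype (G.neighborSet z)]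
    [Fintype ((DelV G v).neighborSet z)] [DecidableEq V] (h : G.Adj z v) :
    (DelV G v).degree z + 1 = G.degree z := by
  have hnbr : (DelV G v).neighborFinset z = (G.neighborFinset z).erase v := by
    ext w
    simp only [mem_neighborFinset, mem_erase]
    exact ⟨fun hw => ⟨hw.2.2, hw.1⟩, fun hw => ⟨hw.2, G.ne_of_adj h, hw.1⟩⟩
  rw [← card_neighborFinset_eq_degree, ← card_neighborFinset_eq_degree, hnbr,
    card_erase_add_one ((mem_neighborFinset _ _ _).2 h)]

lemma exists_injective_forall_notMem {ι : Type*} [Fintype ι] {N k : ℕ}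
    (A : ι → Finset (Fin N)) (hA : ∀ i, #(A i) ≤ k) (hN : Fintype.card ι + k ≤ N) :
    ∃ c : ι → Fin N, Function.Injective c ∧ ∀ i, c i ∉ A i := by
  classical
  have hall : ∀ s : Finset ι, #s ≤ #(s.biUnion fun i => (A i)ᶜ) := fun s => by
    rcases s.eq_empty_or_nonempty with rfl | ⟨i, hi⟩
    · simp
    · calc #s ≤ Fintype.card ι := card_le_univ s
        _ ≤ #(A i)ᶜ := by rw [card_compl, Fintype.card_fin]; have := hA i; omega
        _ ≤ _ := card_le_card (subset_biUnion_of_mem (fun i => (A i)ᶜ) hi)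
  obtain ⟨c, hc, hcA⟩ := (all_card_le_biUnion_card_iff_exists_injective _).1 hall
  exact ⟨c, hc, fun i => mem_compl.1 (hcA i)⟩

open Classical in
theorem HasStrongColoring.of_delV [Fintype V] {G : SimpleGraph V} [DecidableRel G.Adj]
    {x : V} {N k : ℕ} (hcol : HasStrongColoring (DelV G x) N)
    (hseen : ∀ y, G.Adj x y → #{e : (DelV G x).edgeSet | EdgeSees G s(x, y) e} ≤ k)
    (hN : G.degree x + k ≤ N) : HasStrongColoring G N := by
  obtain ⟨f, hf⟩ := hcol
  let forbidden (e : Sym2 V) : Finset (Fin N) := image f {e' | EdgeSees G e e'}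
  have mem_forbidden (e : Sym2 V) (e' : (DelV G x).edgeSet) (h : EdgeSees G e e') :
      f e' ∈ forbidden e :=
    mem_image_of_mem f (by simpa using h)
  have hforbidden (e : G.incidenceSet x) : #(forbidden e) ≤ k := by
    obtain ⟨y, hy⟩ := Sym2.mem_iff_exists.1 e.2.2
    have hxy : G.Adj x y := by simpa [hy] using e.2.1
    exact card_image_le.trans (hy ▸ hseen y hxy)
  obtain ⟨c, hc, hcf⟩ := exists_injective_forall_notMem
    (fun e : G.incidenceSet x => forbidden e) hforbidden (card_incidenceSet_eq_degree G x ▸ hN)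
  refine ⟨fun e => if h : x ∈ e.1 then c ⟨e, e.2, h⟩
    else f ⟨e, mem_edgeSet_delV.2 ⟨e.2, h⟩⟩, fun e e' hsee => ?_⟩
  by_cases h : x ∈ e.1 <;> by_cases h' : x ∈ e'.1 <;>
    simp only [h, h', dif_pos, dif_neg, not_false_eq_true]
  · exact fun heq => hsee.1 (Subtype.mk.inj (hc heq))
  · exact fun heq => hcf _ (heq ▸ mem_forbidden _ _ hsee)
  · exact fun heq => hcf _ (heq ▸ mem_forbidden _ _ hsee.symm)
  · exact hf _ _ (hsee.delV h h')

open Classical in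
lemma EdgeSees.mem_incidenceFinset_delV [Fintype V] {H : SimpleGraph V} [DecidableRel H.Adj]
    {x y : V} {e : Sym2 V} (hxy : H.Adj x y) (he : e ∈ (DelV H x).edgeSet)
    (hsee : EdgeSees H s(x, y) e) :
    e ∈ (H.neighborFinset x).biUnion (fun z => (DelV H x).incidenceFinset z) ∪
      ((H.neighborFinset y).erase x).biUnion
        (fun w => ((DelV H x).incidenceFinset w).erase s(y, w)) := by
  obtain ⟨-, a, ha, b, hb, hab⟩ := hsee
  have hbx : b ≠ x := fun hbx => (mem_edgeSet_delV.1 he).2 (hbx ▸ hb)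
  have hinc {z : V} (hz : z ∈ e) : e ∈ (DelV H x).incidenceFinset z :=
    (mem_incidenceFinset _ _ _).2 ⟨he, hz⟩
  by_cases hye : y ∈ e
  · exact mem_union_left _ (mem_biUnion.2 ⟨y, (mem_neighborFinset _ _ _).2 hxy, hinc hye⟩)
  rcases Sym2.mem_iff.1 ha with rfl | rfl
  · have hab : H.Adj a b := hab.resolve_left hbx.symm
    exact mem_union_left _ (mem_biUnion.2 ⟨b, (mem_neighborFinset _ _ _).2 hab, hinc hb⟩)
  · have hab : H.Adj a b := hab.resolve_left fun h => hye (h ▸ hb)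
    refine mem_union_right _ (mem_biUnion.2 ⟨b, ?_, ?_⟩)
    · exact mem_erase.2 ⟨hbx, (mem_neighborFinset _ _ _).2 hab⟩
    · exact mem_erase.2 ⟨fun h => hye (h ▸ Sym2.mem_mk_left _ _), hinc hb⟩

open Classical in
lemma card_edgeSees_delV_le [Fintype V] {H : SimpleGraph V} [DecidableRel H.Adj]
    (hore : ∀ u w, H.Adj u w → H.degree u + H.degree w ≤ 8) {x y : V} (hx : H.degree x = 4)
    (hnbr : ∀ y, H.Adj x y → H.degree y = 3) (hxy : H.Adj x y) :
    #{e : (DelV H x).edgeSet | EdgeSees H s(x, y) e} ≤ 16 := by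
  let nearX := (H.neighborFinset x).biUnion fun z => (DelV H x).incidenceFinset z
  let nearY := ((H.neighborFinset y).erase x).biUnion
    fun w => ((DelV H x).incidenceFinset w).erase s(y, w)
  have hnearX : #nearX ≤ 4 * 2 := by
    rw [← hx, ← card_neighborFinset_eq_degree]
    refine card_biUnion_le_card_mul _ _ _ fun z hz => ?_
    have hzx : H.Adj z x := ((mem_neighborFinset _ _ _).1 hz).symm
    have := degree_delV_add_one hzx
    rw [card_incidenceFinset_eq_degree, hnbr z hzx.symm] at *
    omega
  have hnearY : #nearY ≤ 2 * 4 := by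
    have hcard : #((H.neighborFinset y).erase x) = 2 := by
      rw [card_erase_of_mem ((mem_neighborFinset _ _ _).2 hxy.symm),
        card_neighborFinset_eq_degree, hnbr y hxy]
    rw [← hcard]
    refine card_biUnion_le_card_mul _ _ _ fun w hw => ?_
    obtain ⟨hwx, hyw⟩ := mem_erase.1 hw
    rw [mem_neighborFinset] at hyw
    have hyw' : s(y, w) ∈ (DelV H x).incidenceFinset w := by
      refine (mem_incidenceFinset _ _ _).2
        ⟨mem_edgeSet_delV.2 ⟨hyw, ?_⟩, Sym2.mem_mk_right _ _⟩
      simp [hwx.symm, H.ne_of_adj hxy]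
    rw [card_erase_of_mem hyw', card_incidenceFinset_eq_degree]
    have := degree_le_of_le (v := w) (delV_le H x)
    have := hore y w hyw
    rw [hnbr y hxy] at this
    omega
  calc #{e : (DelV H x).edgeSet | EdgeSees H s(x, y) e}
      ≤ #(nearX ∪ nearY) := card_le_card_of_injOn Subtype.val
        (fun e he => EdgeSees.mem_incidenceFinset_delV hxy e.2 (by simpa using he))
        Subtype.val_injective.injOn
    _ ≤ #nearX + #nearY := card_union_le _ _
    _ ≤ 16 := by omega

/-- θ ≤ 8, χ'ₛ > 20: no 4-vertex is adjacent to four 3-vertices, i.e. no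
4-vertex has all its neighbors of degree 3. -/
theorem stmt9 [Fintype V] (H : SimpleGraph V) [DecidableRel H.Adj]
    (hore : ∀ u w, H.Adj u w → H.degree u + H.degree w ≤ 8)
    (hnc : ¬ HasStrongColoring H 20)
    (hmin : ∀ v, HasStrongColoring (DelV H v) 20) :
    ¬ ∃ x, H.degree x = 4 ∧ ∀ y, H.Adj x y → H.degree y = 3 := by
  rintro ⟨x, hx, hnbr⟩
  refine hnc (HasStrongColoring.of_delV (k := 16) (hmin x) (fun y hxy => ?_) (by omega))
  exact card_edgeSees_delV_le hore hx hnbr hxy
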